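/- For fixed s ≥ 3 and all integers i₀, j, k ≥ -1, one has n_{(t_{i₀}+t_j+t_k),(i₀+j+k+3)} = p^s_{i₀+2} + p^s_{j+2} + p^s_{k+2}, where n_{ab} = 3 + (s-2)a + (s-1)b. -/
import Mathlib


def pol (s r : ℤ) : ℤ := ((s - 2) * r ^ 2 - (s - 4) * r) / 2

def tri (i : ℤ) : ℤ := i * (i + 1) / 2

lemma tri_two (i : ℤ) : 2 * tri i = i * (i + 1) := by
  obtain ⟨c, hc⟩ := Int.even_mul_succ_self i
  unfold tri
  omega

lemma pol_two (s r : ℤ) : 2 * pol s r = (s - 2) * r ^ 2 - (s - 4) * r := by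
  obtain ⟨c, hc⟩ := Int.even_mul_succ_self (r - 1)
  have h : (s - 2) * r ^ 2 - (s - 4) * r = 2 * (s * c - r ^ 2 + 2 * r) := by
    linear_combination s * hc
  unfold pol
  rw [h, Int.mul_ediv_cancel_left _ two_ne_zero]

theorem path_decomposition_three (s i₀ j k : ℤ) (hs : 3 ≤ s)
    (hi : -1 ≤ i₀) (hj : -1 ≤ j) (hk : -1 ≤ k) :
    3 + (s - 2) * (tri i₀ + tri j + tri k) + (s - 1) * (i₀ + j + k + 3) =
      pol s (i₀ + 2) + pol s (j + 2) + pol s (k + 2) := by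
  apply mul_left_cancel₀ (two_ne_zero (α := ℤ))
  linear_combination (s - 2) * tri_two i₀ + (s - 2) * tri_two j + (s - 2) * tri_two k
    - pol_two s (i₀ + 2) - pol_two s (j + 2) - pol_two s (k + 2)
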